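/- arXiv:1903.00867 — 2 statements merged into one kernel-verified Lean document; each statement's English description precedes it below -/
import Mathlib

section
/- Let n ≥ 1 and let a, b > 0. Suppose ξ_1 > ξ_2 > … > ξ_n are real numbers that are positioned symmetrically around the origin, i.e. ξ_{n+1−j} = −ξ_j for all 1 ≤ j ≤ n, and such that, with p : ℂ → ℂ defined by p(ξ) = ∏_{j=1}^n (ξ − ξ_j), the difference equation A(ξ)·(p(ξ+i) − p(ξ)) + A(−ξ)·(p(ξ−i) − p(ξ)) = E_n · p(ξ) holds for every ξ ∈ ℂ, where A(ξ) = (ξ+ia)(ξ+ib) and E_n = −n(n+2a+2b−1). Then for every 1 ≤ j ≤ ⌊n/2⌋ one has ξ_j ≥ π(n+1−2j)/(2k₋), where k₋ = n + a^{−1} + b^{−1}. -/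
/-!
At a real zero `x` of `p` the difference equation says `W + conj W = 0` for
`W = A(x) p(x + i) = (x + ia)(x + ib) ∏ⱼ (x - ξⱼ + i)`, so `arg W` is an odd multiple
of `π/2`. As `arg (s + ic) = π/2 - arctan (s/c)` for `c > 0`, the phase
`U x = arctan (x/a) + arctan (x/b) + ∑ⱼ arctan (x - ξⱼ)` lies in `(n + 1 - 2ℤ) π/2` at
every zero. `U` is strictly increasing and vanishes at `0` by symmetry, so it is positive at
the innermost positive zero and grows by at least `π` from each positive zero to the next one
outwards, whence `U ξⱼ ≥ (n - 1 - 2j) π/2`. On the other hand `arctan u + arctan v ≤ u + v` whenever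
`u + v ≥ 0`, and pairing `ξⱼ` with `-ξⱼ` gives `U x ≤ k₋ x` for `x ≥ 0`.
-/

open Real Finset
open Complex (I)

namespace Real

lemma lipschitzWith_arctan : LipschitzWith 1 arctan := by
  refine lipschitzWith_of_nnnorm_deriv_le differentiable_arctan fun x => ?_
  rw [deriv_arctan, ← NNReal.coe_le_coe, coe_nnnorm, norm_eq_abs, NNReal.coe_one,
    abs_of_pos (by positivity), div_le_one (by positivity)]
  nlinarith [sq_nonneg x]

lemma arctan_add_arctan_le {u v : ℝ} (h : 0 ≤ u + v) : arctan u + arctan v ≤ u + v := by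
  have hmono : arctan (-u) ≤ arctan v := arctan_le_arctan_iff.mpr (by linarith)
  have hlip := lipschitzWith_arctan.dist_le_mul v (-u)
  rw [dist_eq, dist_eq, NNReal.coe_one, one_mul, abs_of_nonneg (by linarith),
    abs_of_nonneg (by linarith)] at hlip
  rw [arctan_neg] at hmono hlip
  linarith

lemma arctan_le_self {x : ℝ} (hx : 0 ≤ x) : arctan x ≤ x := by
  simpa using arctan_add_arctan_le (u := x) (v := 0) (by simpa)

end Real

lemma ofReal_add_I_mul_eq_polar {s c : ℝ} (hc : 0 < c) :
    (s : ℂ) + I * c =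
      ((c / cos (arctan (s / c)) : ℝ) : ℂ) *
        Complex.exp (↑(π / 2 - arctan (s / c)) * I) := by
  set t := arctan (s / c)
  have hcos : cos t ≠ 0 := (cos_arctan_pos _).ne'
  have hsin : c / cos t * sin t = s := by
    have htan : tan t = s / c := tan_arctan _
    rw [tan_eq_sin_div_cos] at htan
    field_simp at htan ⊢
    linarith
  rw [Complex.exp_mul_I, ← Complex.ofReal_cos, ← Complex.ofReal_sin, cos_pi_div_two_sub,
    sin_pi_div_two_sub, ← hsin, Complex.ofReal_mul, Complex.ofReal_div]
  have hcos' : (cos t : ℂ) ≠ 0 := Complex.ofReal_ne_zero.mpr hcos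
  field_simp

lemma exists_sum_arctan_eq_of_re_prod_eq_zero {ι : Type*} [Fintype ι] (s c : ι → ℝ)
    (hc : ∀ i, 0 < c i) (h : (∏ i, ((s i : ℂ) + I * c i)).re = 0) :
    ∃ m : ℤ, ∑ i, arctan (s i / c i) = (Fintype.card ι - 1 - 2 * m) * (π / 2) := by
  set R := ∏ i, c i / cos (arctan (s i / c i))
  set θ := ∑ i, (π / 2 - arctan (s i / c i))
  have hpolar : ∏ i, ((s i : ℂ) + I * c i) = R * Complex.exp (θ * I) := by
    rw [prod_congr rfl fun i _ => ofReal_add_I_mul_eq_polar (hc i), prod_mul_distrib,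
      ← Complex.exp_sum, ← sum_mul, ← Complex.ofReal_prod, ← Complex.ofReal_sum]
  have hR : 0 < R := prod_pos fun i _ => div_pos (hc i) (cos_arctan_pos _)
  rw [hpolar, Complex.re_ofReal_mul, Complex.exp_ofReal_mul_I_re] at h
  obtain ⟨k, hk⟩ := cos_eq_zero_iff.mp ((mul_eq_zero.mp h).resolve_left hR.ne')
  refine ⟨k, ?_⟩
  have hθ : θ = Fintype.card ι * (π / 2) - ∑ i, arctan (s i / c i) := by
    simp [θ, sum_sub_distrib]
  linarith

lemma Fin.sub_le_sub_of_strictMono {n : ℕ} {f : Fin n → ℤ} (hf : StrictMono f) {i j : Fin n}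
    (hij : i ≤ j) : (j : ℤ) - i ≤ f j - f i := by
  have hcard := card_le_card (s := (Icc i j).image f) (t := Icc (f i) (f j)) fun x hx => by
    obtain ⟨k, hk, rfl⟩ := mem_image.mp hx
    obtain ⟨hik, hkj⟩ := mem_Icc.mp hk
    exact mem_Icc.mpr ⟨hf.monotone hik, hf.monotone hkj⟩
  rw [card_image_of_injective _ hf.injective, Fin.card_Icc, Int.card_Icc] at hcard
  have : i.val ≤ j.val := hij
  omega

lemma Fin.sum_comp_neg_of_rev {n : ℕ} {ξ : Fin n → ℝ} (hsym : ∀ j, ξ j.rev = -ξ j)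
    (f : ℝ → ℝ) : ∑ j, f (-ξ j) = ∑ j, f (ξ j) := by
  simp_rw [← hsym]
  exact Equiv.sum_comp Fin.revPerm (fun j => f (ξ j))

lemma StrictAnti.pos_of_lt_rev {n : ℕ} {ξ : Fin n → ℝ} (hξ : StrictAnti ξ)
    (hsym : ∀ j, ξ j.rev = -ξ j) {j : Fin n} (hj : j < j.rev) : 0 < ξ j := by
  linarith [hsym j ▸ hξ hj]

namespace ContinuousHahn

variable {n : ℕ} (a b : ℝ) (ξ : Fin n → ℝ)

noncomputable def phase (x : ℝ) : ℝ :=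
  arctan (x / a) + arctan (x / b) + ∑ j, arctan (x - ξ j)

/-- `A(x) p(x + i)`. -/
noncomputable def shiftedProduct (x : ℝ) : ℂ :=
  ((x : ℂ) + I * a) * ((x : ℂ) + I * b) * ∏ j, ((x : ℂ) + I - ξ j)

variable {a b ξ}

lemma phase_strictMono (ha : 0 < a) (hb : 0 < b) : StrictMono (phase a b ξ) := fun x y hxy => by
  have hsum : ∑ j, arctan (x - ξ j) ≤ ∑ j, arctan (y - ξ j) :=
    sum_le_sum fun j _ => arctan_strictMono.monotone (by linarith)
  have := arctan_strictMono (div_lt_div_of_pos_right hxy ha)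
  have := arctan_strictMono (div_lt_div_of_pos_right hxy hb)
  unfold phase
  linarith

lemma phase_zero (hsym : ∀ j, ξ j.rev = -ξ j) : phase a b ξ 0 = 0 := by
  have h := Fin.sum_comp_neg_of_rev hsym arctan
  simp only [arctan_neg, sum_neg_distrib] at h
  simp only [phase, zero_div, arctan_zero, zero_sub, arctan_neg, sum_neg_distrib, zero_add]
  linarith

lemma phase_le (ha : 0 < a) (hb : 0 < b) (hsym : ∀ j, ξ j.rev = -ξ j) {x : ℝ} (hx : 0 ≤ x) :
    phase a b ξ x ≤ (n + a⁻¹ + b⁻¹) * x := by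
  have hpair : ∑ j, (arctan (x - ξ j) + arctan (x + ξ j)) ≤ ∑ _j : Fin n, 2 * x :=
    sum_le_sum fun j _ => by
      linarith [arctan_add_arctan_le (u := x - ξ j) (v := x + ξ j) (by linarith)]
  have hflip : ∑ j, arctan (x + ξ j) = ∑ j, arctan (x - ξ j) := by
    simpa [sub_eq_add_neg] using (Fin.sum_comp_neg_of_rev hsym (fun t => arctan (x + t))).symm
  rw [sum_add_distrib, hflip, sum_const, card_univ, Fintype.card_fin, nsmul_eq_mul] at hpair
  have hxa : arctan (x / a) ≤ a⁻¹ * x :=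
    (arctan_le_self (by positivity)).trans_eq (div_eq_inv_mul _ _)
  have hxb : arctan (x / b) ≤ b⁻¹ * x :=
    (arctan_le_self (by positivity)).trans_eq (div_eq_inv_mul _ _)
  unfold phase
  linarith

lemma re_shiftedProduct_eq_zero (x : ℝ)
    (h : shiftedProduct a b ξ x +
      (-(x : ℂ) + I * a) * (-(x : ℂ) + I * b) * ∏ j, ((x : ℂ) - I - ξ j) = 0) :
    (shiftedProduct a b ξ x).re = 0 := by
  have hconj : (-(x : ℂ) + I * a) * (-(x : ℂ) + I * b) * ∏ j, ((x : ℂ) - I - ξ j) =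
      (starRingEnd ℂ) (shiftedProduct a b ξ x) := by
    simp only [shiftedProduct, map_mul, map_prod, map_add, map_sub, Complex.conj_ofReal,
      Complex.conj_I]
    ring_nf
  rw [hconj, Complex.add_conj] at h
  have h : 2 * (shiftedProduct a b ξ x).re = 0 := by exact_mod_cast h
  linarith

lemma exists_phase_eq (ha : 0 < a) (hb : 0 < b) (x : ℝ)
    (h : (shiftedProduct a b ξ x).re = 0) :
    ∃ m : ℤ, phase a b ξ x = (n + 1 - 2 * m) * (π / 2) := by
  have hfactor : ∀ j, (x : ℂ) + I - ξ j = ((x - ξ j : ℝ) : ℂ) + I * (1 : ℝ) := fun j => by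
    push_cast; ring
  obtain ⟨m, hm⟩ := exists_sum_arctan_eq_of_re_prod_eq_zero
    (Fin.cons x (Fin.cons x fun j => x - ξ j) : Fin (n + 2) → ℝ)
    (Fin.cons a (Fin.cons b fun _ => 1)) (Fin.cases ha (Fin.cases hb fun _ => one_pos))
    (by simpa only [Fin.prod_univ_succ, Fin.cons_zero, Fin.cons_succ, hfactor, mul_assoc,
      shiftedProduct] using h)
  refine ⟨m, ?_⟩
  simp only [Fin.sum_univ_succ, Fin.cons_zero, Fin.cons_succ, div_one, Fintype.card_fin] at hm
  unfold phase
  push_cast at hm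
  linarith

lemma le_phase_of_quantized (ha : 0 < a) (hb : 0 < b) (hξ : StrictAnti ξ)
    (hsym : ∀ j, ξ j.rev = -ξ j)
    (hquant : ∀ k, ∃ m : ℤ, phase a b ξ (ξ k) = (n + 1 - 2 * m) * (π / 2))
    {j : Fin n} (hj : j.val + 1 ≤ n / 2) :
    ((n : ℝ) - 1 - 2 * j.val) * (π / 2) ≤ phase a b ξ (ξ j) := by
  choose m hm using hquant
  have hm_mono : StrictMono m := fun k k' hkk' => by
    have := phase_strictMono (ξ := ξ) ha hb (hξ hkk')
    rw [hm, hm] at this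
    have : (m k : ℝ) < m k' := by nlinarith [pi_pos]
    exact_mod_cast this
  -- the innermost positive zero
  set k₀ : Fin n := ⟨n / 2 - 1, by omega⟩
  have hk₀ : (k₀ : ℕ) = n / 2 - 1 := rfl
  have hjk₀ : j ≤ k₀ := Fin.le_def.mpr (by omega)
  have hmk₀ : 2 * m k₀ ≤ n := by
    have := phase_strictMono (ξ := ξ) ha hb
      (hξ.pos_of_lt_rev hsym (j := k₀) (Fin.lt_def.mpr (by rw [Fin.val_rev]; omega)))
    rw [phase_zero hsym, hm] at this
    have : (2 * m k₀ : ℝ) < n + 1 := by nlinarith [pi_pos]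
    have : 2 * m k₀ < n + 1 := by exact_mod_cast this
    omega
  have hmj : (m j : ℝ) ≤ j + 1 := by
    have := Fin.sub_le_sub_of_strictMono hm_mono hjk₀
    exact_mod_cast (show m j ≤ j + 1 by omega)
  rw [hm]
  exact mul_le_mul_of_nonneg_right (by linarith) (by positivity)

end ContinuousHahn

open ContinuousHahn in
theorem continuous_hahn_positive_zero_bounds_general
    (n : ℕ) (a b : ℝ) (ha : 0 < a) (hb : 0 < b)
    (ξ : Fin n → ℝ)
    (hdec : ∀ j j' : Fin n, j < j' → ξ j' < ξ j)
    (hsym : ∀ j : Fin n, ξ j.rev = -ξ j)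
    (p : ℂ → ℂ)
    (hp : ∀ z : ℂ, p z = ∏ j : Fin n, (z - (ξ j : ℂ)))
    (A : ℂ → ℂ)
    (hA : ∀ z : ℂ, A z = (z + Complex.I * (a : ℂ)) * (z + Complex.I * (b : ℂ)))
    (En : ℝ)
    (heq : ∀ z : ℂ,
      A z * (p (z + Complex.I) - p z) + A (-z) * (p (z - Complex.I) - p z)
        = (En : ℂ) * p z)
    (km : ℝ)
    (hkm : km = (n : ℝ) + a⁻¹ + b⁻¹) :
    ∀ j : Fin n, j.val + 1 ≤ n / 2 →
      π * ((n : ℝ) - 1 - 2 * j.val) / (2 * km) ≤ ξ j := by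
  intro j hj
  have hξ : StrictAnti ξ := fun _ _ h => hdec _ _ h
  have hquant : ∀ k, ∃ m : ℤ, phase a b ξ (ξ k) = (n + 1 - 2 * m) * (π / 2) := fun k => by
    have hpk : p (ξ k) = 0 := by rw [hp]; exact prod_eq_zero (mem_univ k) (sub_self _)
    refine exists_phase_eq ha hb (ξ k) (re_shiftedProduct_eq_zero (ξ k) ?_)
    simpa only [hpk, sub_zero, mul_zero, hA, hp, shiftedProduct] using heq (ξ k)
  have hlower := le_phase_of_quantized ha hb hξ hsym hquant hj
  have hupper := phase_le ha hb hsym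
    (hξ.pos_of_lt_rev hsym (j := j) (Fin.lt_def.mpr (by rw [Fin.val_rev]; omega))).le
  rw [← hkm] at hupper
  have hkm_pos : 0 < km := by rw [hkm]; positivity
  rw [div_le_iff₀ (by positivity)]
  linarith

/-- Lower bounds for the positive zeros of the symmetric continuous Hahn polynomial,
whose zeros are positioned symmetrically around the origin. -/
theorem continuous_hahn_positive_zero_bounds
    (n : ℕ) (hn : 1 ≤ n) (a b : ℝ) (ha : 0 < a) (hb : 0 < b)
    (ξ : Fin n → ℝ)
    (hdec : ∀ j j' : Fin n, j < j' → ξ j' < ξ j)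
    (hsym : ∀ j : Fin n, ξ j.rev = -ξ j)
    (p : ℂ → ℂ)
    (hp : ∀ z : ℂ, p z = ∏ j : Fin n, (z - (ξ j : ℂ)))
    (A : ℂ → ℂ)
    (hA : ∀ z : ℂ, A z = (z + Complex.I * (a : ℂ)) * (z + Complex.I * (b : ℂ)))
    (En : ℝ)
    (hEn : En = -(n : ℝ) * ((n : ℝ) + 2 * a + 2 * b - 1))
    (heq : ∀ z : ℂ,
      A z * (p (z + Complex.I) - p z) + A (-z) * (p (z - Complex.I) - p z)
        = (En : ℂ) * p z)
    (km : ℝ)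
    (hkm : km = (n : ℝ) + a⁻¹ + b⁻¹) :
    ∀ j : Fin n, j.val + 1 ≤ n / 2 →
      π * ((n : ℝ) - 1 - 2 * j.val) / (2 * km) ≤ ξ j :=
  continuous_hahn_positive_zero_bounds_general n a b ha hb ξ hdec hsym p hp A hA En heq km hkm
end

section
/- For r > 0 and σ ∈ {1, −1} define v_{r,σ} : ℝ → ℝ by v_{r,σ}(x) = ∫_0^x sinh(r)/(cosh(r) − σ·cos y) dy. Let n ≥ 1, let K ≥ 3 and L ≥ 1 be natural numbers, let r_1,…,r_K > 0, s_1,…,s_L > 0 and σ_1,…,σ_K, τ_1,…,τ_L ∈ {1,−1}. If ξ = (ξ_1,…,ξ_n) ∈ ℝ^n satisfies, for every j ∈ {1,…,n}, the system Σ_{k=1}^K v_{r_k,σ_k}(ξ_j) + Σ_{j′≠j} Σ_{l=1}^L ( v_{s_l,τ_l}(ξ_{j′} + ξ_j) − v_{s_l,τ_l}(ξ_{j′} − ξ_j) ) = 2π(n+1−j), then π > ξ_1 > ξ_2 > … > ξ_n > 0. -/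
open Real Finset

/-- The trigonometric function `v_{r,σ}(x) = ∫_0^x sinh r / (cosh r − σ cos y) dy`. -/
noncomputable def vTrig (r σ x : ℝ) : ℝ :=
  ∫ y in (0:ℝ)..x, Real.sinh r / (Real.cosh r - σ * Real.cos y)

/-!
With `β = σ e^{-r}` (so `|β| < 1`), the integrand of `v_{r,σ}` is the Poisson kernel
`(1 - β²) / (1 - 2β cos y + β²)`, whose primitive `x + 2 arctan (β sin x / (1 - β cos x))` gives
`v_{r,σ}` in closed form: it is strictly increasing, fixes `0` and `π`, and
`v(x + 2π) = v(x) + 2π`. Only these facts enter the rest of the argument.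

The left-hand side of the `j`-th equation is monotone in `ξ_j`: if `ξ_j ≤ ξ_{j'}`, each term of
equation `j` is at most the matching term of equation `j'` (for the pair term because
`v(ξ_j - ξ_{j'}) ≤ v(ξ_{j'} - ξ_j)`), while the right-hand side strictly decreases in `j`; this
forces the ordering. If `ξ_j ≤ 0` the left-hand side is `≤ 0`, below the right-hand side. If
`ξ_j ≥ π`, quasi-periodicity makes every pair term at least `2πL` and the first sum is at least
`Kπ`, so the left-hand side is at least `Kπ + 2πL(n - 1) > 2πn`.
-/

noncomputable def circlePoissonKernel (β x : ℝ) : ℝ := (1 - β ^ 2) / (1 - 2 * β * cos x + β ^ 2)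

noncomputable def circlePoissonPrimitive (β x : ℝ) : ℝ := x + 2 * arctan (β * sin x / (1 - β * cos x))

section Poisson

variable {β : ℝ}

lemma one_sub_mul_cos_pos (hβ : |β| < 1) (x : ℝ) : 0 < 1 - β * cos x := by
  have : |β * cos x| < 1 := by
    rw [abs_mul]
    exact lt_of_le_of_lt (mul_le_of_le_one_right (abs_nonneg β) (abs_cos_le_one x)) hβ
  linarith [le_abs_self (β * cos x)]

lemma one_sub_two_mul_cos_add_sq_eq (β x : ℝ) :
    1 - 2 * β * cos x + β ^ 2 = (1 - β * cos x) ^ 2 + (β * sin x) ^ 2 := by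
  linear_combination (-β ^ 2) * sin_sq_add_cos_sq x

lemma one_sub_two_mul_cos_add_sq_pos (hβ : |β| < 1) (x : ℝ) : 0 < 1 - 2 * β * cos x + β ^ 2 := by
  have := one_sub_mul_cos_pos hβ x
  rw [one_sub_two_mul_cos_add_sq_eq]
  positivity

lemma circlePoissonKernel_pos (hβ : |β| < 1) (x : ℝ) : 0 < circlePoissonKernel β x :=
  div_pos (by nlinarith [abs_nonneg β, sq_abs β]) (one_sub_two_mul_cos_add_sq_pos hβ x)

lemma continuous_circlePoissonKernel (hβ : |β| < 1) : Continuous (circlePoissonKernel β) :=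
  continuous_const.div (by fun_prop) fun x => (one_sub_two_mul_cos_add_sq_pos hβ x).ne'

lemma hasDerivAt_circlePoissonPrimitive (hβ : |β| < 1) (x : ℝ) :
    HasDerivAt (circlePoissonPrimitive β) (circlePoissonKernel β x) x := by
  have hD := (one_sub_mul_cos_pos hβ x).ne'
  have hq : HasDerivAt (fun z => β * sin z / (1 - β * cos z))
      ((β * cos x * (1 - β * cos x) - β * sin x * (β * sin x)) / (1 - β * cos x) ^ 2) x :=
    ((hasDerivAt_sin x).const_mul β).div
      (by simpa using ((hasDerivAt_cos x).const_mul β).const_sub 1) hD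
  refine ((hasDerivAt_id x).add (hq.arctan.const_mul 2)).congr_deriv ?_
  have hden := (one_sub_two_mul_cos_add_sq_pos hβ x).ne'
  unfold circlePoissonKernel
  field_simp
  linear_combination (2 * β ^ 3 * cos x - 2 * β ^ 2) * sin_sq_add_cos_sq x

lemma strictMono_circlePoissonPrimitive (hβ : |β| < 1) : StrictMono (circlePoissonPrimitive β) :=
  strictMono_of_hasDerivAt_pos (hasDerivAt_circlePoissonPrimitive hβ) (circlePoissonKernel_pos hβ)

@[simp] lemma circlePoissonPrimitive_zero : circlePoissonPrimitive β 0 = 0 := by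
  simp [circlePoissonPrimitive]

@[simp] lemma circlePoissonPrimitive_pi : circlePoissonPrimitive β π = π := by
  simp [circlePoissonPrimitive]

lemma circlePoissonPrimitive_add_two_pi (x : ℝ) :
    circlePoissonPrimitive β (x + 2 * π) = circlePoissonPrimitive β x + 2 * π := by
  simp only [circlePoissonPrimitive, sin_add_two_pi, cos_add_two_pi]
  ring

end Poisson

lemma sinh_div_cosh_sub_mul_cos {σ : ℝ} (hσ : σ ^ 2 = 1) (r y : ℝ) :
    sinh r / (cosh r - σ * cos y) = circlePoissonKernel (σ * exp (-r)) y := by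
  have he : exp r * exp (-r) = 1 := by rw [← exp_add, add_neg_cancel, exp_zero]
  have h2 : (0 : ℝ) < 2 * exp (-r) := by positivity
  rw [circlePoissonKernel, ← mul_div_mul_right _ _ h2.ne', sinh_eq, cosh_eq]
  congr 1
  · linear_combination (exp (-r) ^ 2) * hσ + he
  · linear_combination -(exp (-r) ^ 2) * hσ + he

lemma abs_mul_exp_neg_lt_one {σ r : ℝ} (hσ : σ ^ 2 = 1) (hr : 0 < r) : |σ * exp (-r)| < 1 := by
  have hσ' : |σ| = 1 := (pow_eq_one_iff_of_nonneg (abs_nonneg σ) two_ne_zero).mp (by rwa [sq_abs])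
  rw [abs_mul, hσ', one_mul, abs_of_pos (exp_pos _)]
  exact exp_lt_one_iff.mpr (neg_neg_of_pos hr)

theorem vTrig_eq_circlePoissonPrimitive {r σ : ℝ} (hr : 0 < r) (hσ : σ ^ 2 = 1) :
    vTrig r σ = circlePoissonPrimitive (σ * exp (-r)) := by
  have hβ := abs_mul_exp_neg_lt_one hσ hr
  funext x
  simp only [vTrig, sinh_div_cosh_sub_mul_cos hσ]
  rw [intervalIntegral.integral_eq_sub_of_hasDerivAt
    (fun y _ => hasDerivAt_circlePoissonPrimitive hβ y)
    ((continuous_circlePoissonKernel hβ).intervalIntegrable _ _),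
    circlePoissonPrimitive_zero, sub_zero]

section vTrig
variable {r σ : ℝ}

lemma strictMono_vTrig (hr : 0 < r) (hσ : σ ^ 2 = 1) : StrictMono (vTrig r σ) := by
  rw [vTrig_eq_circlePoissonPrimitive hr hσ]
  exact strictMono_circlePoissonPrimitive (abs_mul_exp_neg_lt_one hσ hr)

@[simp] lemma vTrig_zero : vTrig r σ 0 = 0 := by simp [vTrig]

lemma vTrig_pi (hr : 0 < r) (hσ : σ ^ 2 = 1) : vTrig r σ π = π := by
  rw [vTrig_eq_circlePoissonPrimitive hr hσ, circlePoissonPrimitive_pi]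

lemma vTrig_add_two_pi (hr : 0 < r) (hσ : σ ^ 2 = 1) (x : ℝ) :
    vTrig r σ (x + 2 * π) = vTrig r σ x + 2 * π := by
  rw [vTrig_eq_circlePoissonPrimitive hr hσ, circlePoissonPrimitive_add_two_pi]

end vTrig

section SumVTrig
variable {ι : Type*} [Fintype ι] {r σ : ι → ℝ}

lemma monotone_sum_vTrig (hr : ∀ i, 0 < r i)
    (hσ : ∀ i, σ i ^ 2 = 1) : Monotone fun x => ∑ i, vTrig (r i) (σ i) x :=
  fun _ _ h => sum_le_sum fun i _ => (strictMono_vTrig (hr i) (hσ i)).monotone h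

lemma sum_vTrig_pi (hr : ∀ i, 0 < r i)
    (hσ : ∀ i, σ i ^ 2 = 1) : ∑ i, vTrig (r i) (σ i) π = Fintype.card ι * π := by
  simp [vTrig_pi (hr _) (hσ _)]

lemma sum_vTrig_add_two_pi (hr : ∀ i, 0 < r i)
    (hσ : ∀ i, σ i ^ 2 = 1) (x : ℝ) :
    ∑ i, vTrig (r i) (σ i) (x + 2 * π) = ∑ i, vTrig (r i) (σ i) x + Fintype.card ι * (2 * π) := by
  simp [vTrig_add_two_pi (hr _) (hσ _), sum_add_distrib]

end SumVTrig

/-- `F` and `G` stand for the sums over `k` and over `l` of the functions `v`. -/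
def betheLHS {n : ℕ} (F G : ℝ → ℝ) (ξ : Fin n → ℝ) (j : Fin n) : ℝ :=
  F (ξ j) + ∑ j' ∈ univ.erase j, (G (ξ j' + ξ j) - G (ξ j' - ξ j))

section Bethe
variable {n : ℕ} {F G : ℝ → ℝ} (ξ : Fin n → ℝ)

lemma betheLHS_le_of_le (hF : Monotone F) (hG : Monotone G) {j j' : Fin n}
    (h : ξ j ≤ ξ j') : betheLHS F G ξ j ≤ betheLHS F G ξ j' := by
  rcases eq_or_ne j j' with rfl | hne
  · rfl
  have hj' : j' ∈ univ.erase j := mem_erase.mpr ⟨hne.symm, mem_univ _⟩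
  have hj : j ∈ univ.erase j' := mem_erase.mpr ⟨hne, mem_univ _⟩
  have pair : G (ξ j' + ξ j) - G (ξ j' - ξ j) ≤ G (ξ j + ξ j') - G (ξ j - ξ j') := by
    rw [add_comm]
    linarith [hG (by linarith : ξ j - ξ j' ≤ ξ j' - ξ j)]
  have rest : ∀ m, G (ξ m + ξ j) - G (ξ m - ξ j) ≤ G (ξ m + ξ j') - G (ξ m - ξ j') := fun m => by
    linarith [hG (by linarith : ξ m + ξ j ≤ ξ m + ξ j'), hG (by linarith : ξ m - ξ j' ≤ ξ m - ξ j)]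
  rw [betheLHS, betheLHS, ← add_sum_erase _ _ hj', ← add_sum_erase _ _ hj, erase_right_comm]
  exact add_le_add (hF h) (add_le_add pair (sum_le_sum fun m _ => rest m))

lemma betheLHS_le_of_nonpos (hF : Monotone F) (hG : Monotone G) {j : Fin n} (h : ξ j ≤ 0) :
    betheLHS F G ξ j ≤ F 0 := by
  have terms : ∑ m ∈ univ.erase j, (G (ξ m + ξ j) - G (ξ m - ξ j)) ≤ 0 :=
    sum_nonpos fun m _ => sub_nonpos.mpr (hG (by linarith))
  unfold betheLHS
  linarith [hF h]

lemma le_betheLHS_of_le (hF : Monotone F) (hG : Monotone G) {p q : ℝ}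
    (hGper : ∀ x, G (x + p) = G x + q) {j : Fin n} (h : p ≤ 2 * ξ j) :
    F (p / 2) + (n - 1) * q ≤ betheLHS F G ξ j := by
  have terms : ∑ m ∈ univ.erase j, q ≤ ∑ m ∈ univ.erase j, (G (ξ m + ξ j) - G (ξ m - ξ j)) :=
    sum_le_sum fun m _ => le_sub_iff_add_le'.mpr (hGper (ξ m - ξ j) ▸ hG (by linarith))
  rw [sum_const, card_erase_of_mem (mem_univ j), card_univ, Fintype.card_fin, nsmul_eq_mul,
    Nat.cast_pred (Fin.pos j)] at terms
  unfold betheLHS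
  linarith [hF (by linarith : p / 2 ≤ ξ j)]

end Bethe

theorem trigB_solution_ordering_general
    (n K L : ℕ) (hK : 3 ≤ K) (hL : 1 ≤ L)
    (r : Fin K → ℝ) (σ : Fin K → ℝ) (s : Fin L → ℝ) (τ : Fin L → ℝ)
    (hr : ∀ k, 0 < r k) (hs : ∀ l, 0 < s l)
    (hσ : ∀ k, σ k = 1 ∨ σ k = -1) (hτ : ∀ l, τ l = 1 ∨ τ l = -1)
    (ξ : Fin n → ℝ)
    (hξ : ∀ j : Fin n,
      (∑ k, vTrig (r k) (σ k) (ξ j)) +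
      (∑ j' ∈ Finset.univ.erase j, ∑ l,
        (vTrig (s l) (τ l) (ξ j' + ξ j) - vTrig (s l) (τ l) (ξ j' - ξ j)))
      = 2 * π * ((n : ℝ) - j.val)) :
    (∀ j j' : Fin n, j < j' → ξ j' < ξ j) ∧ (∀ j : Fin n, 0 < ξ j ∧ ξ j < π) := by
  have hσ k : σ k ^ 2 = 1 := sq_eq_one_iff.mpr (hσ k)
  have hτ l : τ l ^ 2 = 1 := sq_eq_one_iff.mpr (hτ l)
  have hB j : betheLHS (fun x => ∑ k, vTrig (r k) (σ k) x) (fun x => ∑ l, vTrig (s l) (τ l) x) ξ j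
      = 2 * π * ((n : ℝ) - j.val) := by
    simpa only [betheLHS, sum_sub_distrib] using hξ j
  have hF := monotone_sum_vTrig hr hσ
  have hG := monotone_sum_vTrig hs hτ
  have hj (j : Fin n) : 0 ≤ (j : ℝ) ∧ (j : ℝ) + 1 ≤ n := ⟨j.val.cast_nonneg, by exact_mod_cast j.isLt⟩
  refine ⟨fun j j' hjj' => ?_, fun j => ⟨?_, ?_⟩⟩
  · by_contra! h
    have := hB j ▸ hB j' ▸ betheLHS_le_of_le ξ hF hG h
    have : (j : ℝ) < j' := by exact_mod_cast hjj'
    nlinarith [pi_pos]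
  · by_contra! h
    have := hB j ▸ betheLHS_le_of_nonpos ξ hF hG h
    simp only [vTrig_zero, sum_const_zero] at this
    nlinarith [pi_pos, hj j]
  · by_contra! h
    have := hB j ▸ le_betheLHS_of_le ξ hF hG (sum_vTrig_add_two_pi hs hτ) (by linarith)
    rw [mul_div_cancel_left₀ π two_ne_zero, sum_vTrig_pi hr hσ, Fintype.card_fin,
      Fintype.card_fin] at this
    have hK : (3 : ℝ) ≤ K := by exact_mod_cast hK
    have hL : (1 : ℝ) ≤ L := by exact_mod_cast hL
    have hn : (0 : ℝ) ≤ n - 1 := by linarith [hj j]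
    nlinarith [pi_pos, mul_nonneg hn (sub_nonneg.mpr hL), hj j]

/-- Any solution of the trigonometric type B Bethe system at `α = 0`, `ε = 0`,
`μ = ρ` satisfies `π > ξ_1 > ξ_2 > ⋯ > ξ_n > 0`. -/
theorem trigB_solution_ordering
    (n K L : ℕ) (hn : 1 ≤ n) (hK : 3 ≤ K) (hL : 1 ≤ L)
    (r : Fin K → ℝ) (σ : Fin K → ℝ) (s : Fin L → ℝ) (τ : Fin L → ℝ)
    (hr : ∀ k, 0 < r k) (hs : ∀ l, 0 < s l)
    (hσ : ∀ k, σ k = 1 ∨ σ k = -1) (hτ : ∀ l, τ l = 1 ∨ τ l = -1)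
    (ξ : Fin n → ℝ)
    (hξ : ∀ j : Fin n,
      (∑ k, vTrig (r k) (σ k) (ξ j)) +
      (∑ j' ∈ Finset.univ.erase j, ∑ l,
        (vTrig (s l) (τ l) (ξ j' + ξ j) - vTrig (s l) (τ l) (ξ j' - ξ j)))
      = 2 * π * ((n : ℝ) - j.val)) :
    (∀ j j' : Fin n, j < j' → ξ j' < ξ j) ∧ (∀ j : Fin n, 0 < ξ j ∧ ξ j < π) :=
  trigB_solution_ordering_general n K L hK hL r σ s τ hr hs hσ hτ ξ hξ
end
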